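/- Let Ψ : ℝ × ℝ → ℝ be C² and h : ℝ → ℝ be C¹, and suppose Ψ solves the reduced equation ∂ₜₜΨ − ∂ₓₓΨ + h(Ψ)h'(Ψ) = 0 everywhere. Define F by F_{01} = h(Ψ), F_{02} = ∂ₜΨ, F_{12} = ∂ₓΨ (antisymmetric, other components zero), J^μ = ∂_ν F^{νμ} with indices raised by η = diag(−1,1,1,1), and K = (∂ₓΨ, −∂ₜΨ, h(Ψ), 0). Then the current is proportional to the kernel vector: J^μ = h'(Ψ)·K^μ for all μ at every point. -/

import Mathlib

/-!
The raised field `F^{νμ}` depends only on `(t, x)`, so `J^μ = ∂ₜF^{0μ} + ∂ₓF^{1μ}`. The first two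
components are the chain rule applied to `h(Ψ)`, the third is `∂ₓₓΨ − ∂ₜₜΨ`, which the reduced
equation turns into `h(Ψ) h'(Ψ)`, and the fourth vanishes.
-/

noncomputable section

/-- `∂ₜΨ`. -/
def psiT (Ψ : ℝ × ℝ → ℝ) (t x : ℝ) : ℝ := deriv (fun s => Ψ (s, x)) t

/-- `∂ₓΨ`. -/
def psiX (Ψ : ℝ × ℝ → ℝ) (t x : ℝ) : ℝ := deriv (fun s => Ψ (t, s)) x

/-- `∂ₜₜΨ`. -/
def psiTT (Ψ : ℝ × ℝ → ℝ) (t x : ℝ) : ℝ := deriv (fun s => psiT Ψ s x) t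

/-- `∂ₓₓΨ`. -/
def psiXX (Ψ : ℝ × ℝ → ℝ) (t x : ℝ) : ℝ := deriv (fun s => psiX Ψ t s) x

/-- The antisymmetric field tensor `F_{μν}` of the ansatz
`F = dΨ ∧ dy + h(Ψ) dt ∧ dx`, with `F_{01} = h(Ψ)`, `F_{02} = ∂ₜΨ`, `F_{12} = ∂ₓΨ`. -/
def Fdown (Ψ : ℝ × ℝ → ℝ) (h : ℝ → ℝ) (p : Fin 4 → ℝ) : Matrix (Fin 4) (Fin 4) ℝ :=
  !![0, h (Ψ (p 0, p 1)), psiT Ψ (p 0) (p 1), 0;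
     -(h (Ψ (p 0, p 1))), 0, psiX Ψ (p 0) (p 1), 0;
     -(psiT Ψ (p 0) (p 1)), -(psiX Ψ (p 0) (p 1)), 0, 0;
     0, 0, 0, 0]

/-- The Minkowski metric `η = diag(-1,1,1,1)`. -/
def eta : Matrix (Fin 4) (Fin 4) ℝ := Matrix.diagonal ![-1, 1, 1, 1]

/-- `F^{νμ} = η^{να} η^{μβ} F_{αβ}` (indices raised with `η`). -/
def Fup (Ψ : ℝ × ℝ → ℝ) (h : ℝ → ℝ) (p : Fin 4 → ℝ) : Matrix (Fin 4) (Fin 4) ℝ :=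
  fun ν μ => ∑ α : Fin 4, ∑ β : Fin 4, eta ν α * eta μ β * Fdown Ψ h p α β

/-- Coordinate partial derivative `∂_ν f` on ℝ⁴. -/
def pd (ν : Fin 4) (f : (Fin 4 → ℝ) → ℝ) (p : Fin 4 → ℝ) : ℝ :=
  deriv (fun s => f (Function.update p ν s)) (p ν)

/-- The four-current `J^μ = ∂_ν F^{νμ}`. -/
def Jcur (Ψ : ℝ × ℝ → ℝ) (h : ℝ → ℝ) (p : Fin 4 → ℝ) (μ : Fin 4) : ℝ :=
  ∑ ν : Fin 4, pd ν (fun q => Fup Ψ h q ν μ) p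

/-- The kernel vector field `K = (∂ₓΨ, −∂ₜΨ, h(Ψ), 0)` on ℝ⁴ (independent of `y,z`). -/
def KF (Ψ : ℝ × ℝ → ℝ) (h : ℝ → ℝ) (p : Fin 4 → ℝ) : Fin 4 → ℝ :=
  ![psiX Ψ (p 0) (p 1), -(psiT Ψ (p 0) (p 1)), h (Ψ (p 0, p 1)), 0]

lemma pd_eq_zero_of_forall_update_eq {ν : Fin 4} {f : (Fin 4 → ℝ) → ℝ} {p : Fin 4 → ℝ}
    (hf : ∀ s, f (Function.update p ν s) = f p) : pd ν f p = 0 := by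
  simp [pd, hf]

section TimeSpace

variable (g : ℝ × ℝ → ℝ) (p : Fin 4 → ℝ)

lemma pd_zero_comp_tx :
    pd 0 (fun q => g (q 0, q 1)) p = deriv (fun s => g (s, p 1)) (p 0) := by
  simp [pd]

lemma pd_one_comp_tx :
    pd 1 (fun q => g (q 0, q 1)) p = deriv (fun s => g (p 0, s)) (p 1) := by
  simp [pd]

lemma pd_comp_tx_of_ne {ν : Fin 4} (h0 : ν ≠ 0) (h1 : ν ≠ 1) :
    pd ν (fun q => g (q 0, q 1)) p = 0 :=
  pd_eq_zero_of_forall_update_eq fun s => by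
    simp [Function.update_of_ne h0.symm, Function.update_of_ne h1.symm]

lemma sum_pd_comp_tx (G : ℝ × ℝ → Matrix (Fin 4) (Fin 4) ℝ) (μ : Fin 4) :
    ∑ ν, pd ν (fun q => G (q 0, q 1) ν μ) p
      = deriv (fun s => G (s, p 1) 0 μ) (p 0) + deriv (fun s => G (p 0, s) 1 μ) (p 1) := by
  rw [Fin.sum_univ_four, pd_zero_comp_tx (fun z => G z 0 μ), pd_one_comp_tx (fun z => G z 1 μ),
    pd_comp_tx_of_ne (fun z => G z 2 μ) p (by decide) (by decide),
    pd_comp_tx_of_ne (fun z => G z 3 μ) p (by decide) (by decide), add_zero, add_zero]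

end TimeSpace

lemma Fup_eq (Ψ : ℝ × ℝ → ℝ) (h : ℝ → ℝ) (p : Fin 4 → ℝ) :
    Fup Ψ h p = !![0, -(h (Ψ (p 0, p 1))), -(psiT Ψ (p 0) (p 1)), 0;
      h (Ψ (p 0, p 1)), 0, psiX Ψ (p 0) (p 1), 0;
      psiT Ψ (p 0) (p 1), -(psiX Ψ (p 0) (p 1)), 0, 0;
      0, 0, 0, 0] := by
  ext ν μ
  fin_cases ν <;> fin_cases μ <;>
    simp [Fup, eta, Fdown, Matrix.diagonal]

lemma Jcur_eq (Ψ : ℝ × ℝ → ℝ) (h : ℝ → ℝ) (p : Fin 4 → ℝ) :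
    Jcur Ψ h p = ![deriv (fun s => h (Ψ (p 0, s))) (p 1),
      -deriv (fun s => h (Ψ (s, p 1))) (p 0),
      psiXX Ψ (p 0) (p 1) - psiTT Ψ (p 0) (p 1), 0] := by
  ext μ
  simp only [Jcur, Fup_eq]
  rw [sum_pd_comp_tx p (fun z => !![0, -(h (Ψ z)), -(psiT Ψ z.1 z.2), 0;
      h (Ψ z), 0, psiX Ψ z.1 z.2, 0;
      psiT Ψ z.1 z.2, -(psiX Ψ z.1 z.2), 0, 0;
      0, 0, 0, 0])]
  fin_cases μ <;> simp [psiTT, psiXX, sub_eq_neg_add]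

lemma deriv_comp_eq_mul_psiT {Ψ : ℝ × ℝ → ℝ} {h : ℝ → ℝ} {t x : ℝ}
    (hΨ : DifferentiableAt ℝ Ψ (t, x)) (hh : DifferentiableAt ℝ h (Ψ (t, x))) :
    deriv (fun s => h (Ψ (s, x))) t = deriv h (Ψ (t, x)) * psiT Ψ t x :=
  deriv_comp (h := fun s => Ψ (s, x)) t hh (hΨ.comp t (by fun_prop))

lemma deriv_comp_eq_mul_psiX {Ψ : ℝ × ℝ → ℝ} {h : ℝ → ℝ} {t x : ℝ}
    (hΨ : DifferentiableAt ℝ Ψ (t, x)) (hh : DifferentiableAt ℝ h (Ψ (t, x))) :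
    deriv (fun s => h (Ψ (t, s))) x = deriv h (Ψ (t, x)) * psiX Ψ t x :=
  deriv_comp (h := fun s => Ψ (t, s)) x hh (hΨ.comp x (by fun_prop))

/-- if `Ψ` solves the reduced equation `∂ₜₜΨ − ∂ₓₓΨ + h(Ψ)h'(Ψ) = 0`
everywhere, then the current is proportional to the kernel vector: `J^μ = h'(Ψ)·K^μ`. -/
theorem stmt18 (Ψ : ℝ × ℝ → ℝ) (h : ℝ → ℝ)
    (hΨ : ContDiff ℝ 2 Ψ) (hh : ContDiff ℝ 1 h)
    (heq : ∀ t x : ℝ,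
      psiTT Ψ t x - psiXX Ψ t x + h (Ψ (t, x)) * deriv h (Ψ (t, x)) = 0)
    (p : Fin 4 → ℝ) (μ : Fin 4) :
    Jcur Ψ h p μ = deriv h (Ψ (p 0, p 1)) * KF Ψ h p μ := by
  have hΨ' : DifferentiableAt ℝ Ψ (p 0, p 1) := hΨ.differentiable (by norm_num) _
  have hh' : DifferentiableAt ℝ h (Ψ (p 0, p 1)) := hh.differentiable one_ne_zero _
  rw [Jcur_eq]
  fin_cases μ
  · simp [KF, deriv_comp_eq_mul_psiX hΨ' hh']
  · simp [KF, deriv_comp_eq_mul_psiT hΨ' hh']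
  · simp [KF]
    linarith [heq (p 0) (p 1)]
  · simp [KF]
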